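/- Let C be a left H-category. Then (1) the extension of scalars functor from Mod-C to Mod-(C#H) is exact, and (2) every injective object of Mod-(C#H) is, via restriction of scalars, an injective object of Mod-C. -/

import Mathlib

open CategoryTheory TensorProduct
noncomputable section

structure LinCat (K : Type) [Field K] where
  Obj : Type
  Hom : Obj → Obj → Type
  [addHom : ∀ X Y, AddCommGroup (Hom X Y)]
  [modHom : ∀ X Y, Module K (Hom X Y)]
  idm : ∀ X, Hom X X
  comp : ∀ {X Y Z : Obj}, Hom X Y →ₗ[K] Hom Y Z →ₗ[K] Hom X Z
  id_comp : ∀ {X Y : Obj} (f : Hom X Y), comp (idm X) f = f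
  comp_id : ∀ {X Y : Obj} (f : Hom X Y), comp f (idm Y) = f
  assoc : ∀ {W X Y Z : Obj} (f : Hom W X) (g : Hom X Y) (h : Hom Y Z),
    comp (comp f g) h = comp f (comp g h)

attribute [instance] LinCat.addHom LinCat.modHom

variable (K : Type) [Field K] (H : Type) [Ring H] [HopfAlgebra K H]

structure RMod (D : LinCat K) where
  ob : D.Obj → Type
  [addOb : ∀ X, AddCommGroup (ob X)]
  [modOb : ∀ X, Module K (ob X)]
  map : ∀ {X Y : D.Obj}, D.Hom X Y →ₗ[K] (ob Y →ₗ[K] ob X)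
  map_id : ∀ X, map (D.idm X) = LinearMap.id
  map_comp : ∀ {X Y Z : D.Obj} (f : D.Hom X Y) (g : D.Hom Y Z),
    map (D.comp f g) = (map f) ∘ₗ (map g)

attribute [instance] RMod.addOb RMod.modOb

@[ext] structure RModHom {D : LinCat K} (M N : RMod K D) where
  app : ∀ X, M.ob X →ₗ[K] N.ob X
  natural : ∀ {X Y : D.Obj} (f : D.Hom X Y) (m : M.ob Y),
    app X (M.map f m) = N.map f (app Y m)

instance RMod.instCategory (D : LinCat K) : Category (RMod K D) where
  Hom M N := RModHom K M N
  id M := ⟨fun _ => LinearMap.id, by intros; rfl⟩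
  comp η θ := ⟨fun X => (θ.app X).comp (η.app X), by
    intro X Y f m
    simp only [LinearMap.comp_apply, η.natural, θ.natural]⟩
  id_comp := by intros; rfl
  comp_id := by intros; rfl
  assoc := by intros; rfl

namespace RModHom

variable {K H} {D : LinCat K} {M N : RMod K D}

instance : Zero (RModHom K M N) :=
  ⟨⟨fun _ => 0, by intros; simp⟩⟩

instance : Add (RModHom K M N) :=
  ⟨fun η ν => ⟨fun X => η.app X + ν.app X, by
    intro X Y f m
    simp [η.natural, ν.natural]⟩⟩

instance : Neg (RModHom K M N) :=
  ⟨fun η => ⟨fun X => -η.app X, by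
    intro X Y f m
    simp [η.natural]⟩⟩

instance : Sub (RModHom K M N) :=
  ⟨fun η ν => ⟨fun X => η.app X - ν.app X, by
    intro X Y f m
    simp [η.natural, ν.natural]⟩⟩

instance : SMul K (RModHom K M N) :=
  ⟨fun k η => ⟨fun X => k • η.app X, by
    intro X Y f m
    simp [η.natural]⟩⟩

instance : SMul ℕ (RModHom K M N) :=
  ⟨fun n η => ⟨fun X => n • η.app X, by
    intro X Y f m
    simp [η.natural]⟩⟩

instance : SMul ℤ (RModHom K M N) :=
  ⟨fun n η => ⟨fun X => n • η.app X, by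
    intro X Y f m
    simp [η.natural]⟩⟩

theorem app_injective :
    Function.Injective (fun (η : RModHom K M N) => η.app) := by
  intro η ν h; ext X m; exact congrFun (congrArg (fun u => (u X : M.ob X → N.ob X)) h) m

instance : AddCommGroup (RModHom K M N) :=
  Function.Injective.addCommGroup (fun η => η.app) app_injective
    rfl (fun _ _ => rfl) (fun _ => rfl) (fun _ _ => rfl) (fun _ _ => rfl) (fun _ _ => rfl)

instance : Module K (RModHom K M N) :=
  Function.Injective.module K
    ⟨⟨fun η => η.app, rfl⟩, fun _ _ => rfl⟩ app_injective (fun _ _ => rfl)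

@[simp] theorem add_app (η ν : RModHom K M N) (X : D.Obj) :
    (η + ν).app X = η.app X + ν.app X := rfl

@[simp] theorem smul_app (k : K) (η : RModHom K M N) (X : D.Obj) :
    (k • η).app X = k • η.app X := rfl

@[simp] theorem zero_app (X : D.Obj) : (0 : RModHom K M N).app X = 0 := rfl

end RModHom


section PART3
variable (K : Type) [Field K] (H : Type) [Ring H] [HopfAlgebra K H]

structure LeftHCat extends LinCat K where
  act : ∀ X Y, H →ₗ[K] Hom X Y →ₗ[K] Hom X Y
  act_one : ∀ X Y, act X Y 1 = LinearMap.id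
  act_mul : ∀ X Y (a b : H), act X Y (a * b) = (act X Y a) ∘ₗ (act X Y b)
  act_idm : ∀ (X : Obj) (h : H),
    act X X h (idm X) = Coalgebra.counit (R := K) h • idm X
  act_comp : ∀ {X Y Z : Obj} (h : H) (u : Hom X Y) (v : Hom Y Z),
    act X Z h (comp u v) =
      TensorProduct.lift (comp (X := X) (Y := Y) (Z := Z)).flip
        (TensorProduct.map ((act Y Z).flip v) ((act X Y).flip u)
          (Coalgebra.comul (R := K) h))

variable {K H}

/-- The smash product category `C # H`: it has the same objects as `C` and
`Hom (X, Y) = Hom_C(X, Y) ⊗ H`, with composition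
`(g # h') ≫ (f # h) = ∑ ((h₁ g) ≫ f) # (h₂ * h')` (i.e. `(f#h)∘(g#h') = ∑ f∘(h₁g) # h₂h'`).
Since the composition is uniquely determined by this formula, we record the smash
product category as a structure whose fields assert that these formulas indeed
define a `K`-linear category. -/
structure SmashCat (C : LeftHCat K H) where
  comp : ∀ {X Y Z : C.Obj},
    (C.Hom X Y ⊗[K] H) →ₗ[K] (C.Hom Y Z ⊗[K] H) →ₗ[K] (C.Hom X Z ⊗[K] H)
  comp_tmul : ∀ {X Y Z : C.Obj} (u : C.Hom X Y) (h' : H) (v : C.Hom Y Z) (h : H),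
    comp (u ⊗ₜ[K] h') (v ⊗ₜ[K] h) =
      TensorProduct.map
        (((C.comp (X := X) (Y := Y) (Z := Z)).flip v) ∘ₗ ((C.act X Y).flip u))
        (LinearMap.mulRight K h')
        (Coalgebra.comul (R := K) h)
  id_comp : ∀ {X Y : C.Obj} (f : C.Hom X Y ⊗[K] H),
    comp ((C.idm X) ⊗ₜ[K] (1 : H)) f = f
  comp_id : ∀ {X Y : C.Obj} (f : C.Hom X Y ⊗[K] H),
    comp f ((C.idm Y) ⊗ₜ[K] (1 : H)) = f
  assoc : ∀ {W X Y Z : C.Obj} (f : C.Hom W X ⊗[K] H) (g : C.Hom X Y ⊗[K] H)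
    (h : C.Hom Y Z ⊗[K] H), comp (comp f g) h = comp f (comp g h)

/-- The underlying `K`-linear category of the smash product category `C # H`. -/
def SmashCat.lin {C : LeftHCat K H} (S : SmashCat C) : LinCat K where
  Obj := C.Obj
  Hom X Y := C.Hom X Y ⊗[K] H
  idm X := (C.idm X) ⊗ₜ[K] (1 : H)
  comp := S.comp
  id_comp := S.id_comp
  comp_id := S.comp_id
  assoc := S.assoc

attribute [reducible] SmashCat.lin

section Restrict

variable {C : LeftHCat K H} (S : SmashCat C)

theorem SmashCat.comp_tmul_one {X Y Z : C.Obj} (f : C.Hom X Y) (g : C.Hom Y Z) :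
    S.comp (f ⊗ₜ[K] (1 : H)) (g ⊗ₜ[K] (1 : H)) = (C.comp f g) ⊗ₜ[K] (1 : H) := by
  rw [S.comp_tmul]
  rw [show Coalgebra.comul (R := K) (1 : H) = (1 : H ⊗[K] H) from Bialgebra.comul_one]
  rw [Algebra.TensorProduct.one_def, TensorProduct.map_tmul]
  simp [C.act_one]

/-- Restriction of scalars from `Mod-(C#H)` to `Mod-C`, on objects. -/
def restrictOb (M : RMod K S.lin) : RMod K C.toLinCat where
  ob := M.ob
  map {X Y} := M.map ∘ₗ ((TensorProduct.mk K (C.Hom X Y) H).flip (1 : H))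
  map_id X := M.map_id X
  map_comp {X Y Z} f g := by
    show M.map ((C.comp f g) ⊗ₜ[K] (1 : H)) =
      (M.map (f ⊗ₜ[K] (1 : H))) ∘ₗ (M.map (g ⊗ₜ[K] (1 : H)))
    rw [← S.comp_tmul_one]
    exact M.map_comp _ _

/-- Restriction of scalars on morphisms. -/
def restrictHom {M N : RMod K S.lin} (η : M ⟶ N) :
    restrictOb S M ⟶ restrictOb S N where
  app := η.app
  natural {X Y} f m := η.natural (f ⊗ₜ[K] (1 : H)) m

/-- The restriction of scalars functor `Mod-(C#H) ⥤ Mod-C`. -/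
def restrictFunctor : RMod K S.lin ⥤ RMod K C.toLinCat where
  obj := restrictOb S
  map := restrictHom S
  map_id := by intros; rfl
  map_comp := by intros; rfl

/-- The canonical left `H`-action on the values `M(X)` of a right `C#H`-module:
`h • m := M (id_X # (S h)) m`. -/
def actOn (M : RMod K S.lin) (X : C.Obj) : H →ₗ[K] M.ob X →ₗ[K] M.ob X :=
  M.map ∘ₗ (TensorProduct.mk K (C.Hom X X) H (C.idm X)) ∘ₗ
    (HopfAlgebra.antipode (R := K) (A := H))

/-- The Sweedler-style right-hand side `∑ h₁ • (η X ((S h₂) • m))` of the adjoint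
`H`-action on `C`-module morphisms between (restrictions of) `C#H`-modules. -/
def adjRHS {M N : RMod K S.lin} (η : restrictOb S M ⟶ restrictOb S N)
    (h : H) (X : C.Obj) (m : M.ob X) : N.ob X :=
  TensorProduct.lift
    (((LinearMap.llcomp K H (N.ob X) (N.ob X) (σ₁₂ := RingHom.id K) (σ₂₃ := RingHom.id K)
          (σ₁₃ := RingHom.id K)).flip
        ((η.app X) ∘ₗ (((actOn S M X) ∘ₗ (HopfAlgebra.antipode (R := K) (A := H))).flip m)))
      ∘ₗ (actOn S N X))
    (Coalgebra.comul (R := K) h)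

end Restrict
end PART3

section PART4
variable {K : Type} [Field K] {H : Type} [Ring H] [HopfAlgebra K H]

/-- The property that an (unbundled) family of maps is a right module structure over a
`K`-linear category. -/
def IsRModMap (K : Type) [Field K] (D : LinCat K) (ob : D.Obj → Type)
    [∀ X, AddCommGroup (ob X)] [∀ X, Module K (ob X)]
    (map : ∀ X Y : D.Obj, D.Hom X Y →ₗ[K] (ob Y →ₗ[K] ob X)) : Prop :=
  (∀ X, map X X (D.idm X) = LinearMap.id) ∧
  (∀ (X Y Z : D.Obj) (f : D.Hom X Y) (g : D.Hom Y Z),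
    map X Z (D.comp f g) = (map X Y f) ∘ₗ (map Y Z g))

/-- Bundle unbundled right module data into a module. -/
def RMod.mk' (K : Type) [Field K] (D : LinCat K) (ob : D.Obj → Type)
    [∀ X, AddCommGroup (ob X)] [∀ X, Module K (ob X)]
    (map : ∀ X Y : D.Obj, D.Hom X Y →ₗ[K] (ob Y →ₗ[K] ob X))
    (hmap : IsRModMap K D ob map) : RMod K D where
  ob := ob
  map := map _ _
  map_id := hmap.1
  map_comp := hmap.2 _ _ _

/-- A left `H`-equivariant right `C`-module over a left `H`-category `C`:
a right `C`-module together with left `H`-module structures on its values such that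
`h • (M f m) = ∑ M (h₂ • f) (h₁ • m)`. -/
structure EqMod (C : LeftHCat K H) extends RMod K C.toLinCat where
  eact : ∀ X, H →ₗ[K] ob X →ₗ[K] ob X
  eact_one : ∀ X, eact X 1 = LinearMap.id
  eact_mul : ∀ X (a b : H), eact X (a * b) = (eact X a) ∘ₗ (eact X b)
  equivar : ∀ {X Y : C.Obj} (h : H) (f : C.Hom X Y) (m : ob Y),
    eact X h (map f m) =
      TensorProduct.lift
        (((map (X := X) (Y := Y)).comp ((C.act X Y).flip f)).flip ∘ₗ ((eact Y).flip m))
        (Coalgebra.comul (R := K) h)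

/-- Morphisms of `H`-equivariant right `C`-modules: `C`-module morphisms whose
components are `H`-linear. -/
@[ext] structure EqModHom {C : LeftHCat K H} (M N : EqMod C) where
  hom : M.toRMod ⟶ N.toRMod
  hlin : ∀ (X : C.Obj) (h : H) (m : M.ob X),
    hom.app X (M.eact X h m) = N.eact X h (hom.app X m)

instance EqMod.instCategory (C : LeftHCat K H) : Category (EqMod C) where
  Hom M N := EqModHom M N
  id M := ⟨𝟙 M.toRMod, by intros; rfl⟩
  comp {M N P} η θ := ⟨η.hom ≫ θ.hom, by
    intro X h m
    show θ.hom.app X (η.hom.app X (M.eact X h m)) = _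
    rw [η.hlin, θ.hlin]
    rfl⟩
  id_comp := by intros; rfl
  comp_id := by intros; rfl
  assoc := by intros; rfl

/-- A left `H`-module, unbundled (an object of `H`-Mod). -/
structure HLMod (K : Type) [Field K] (H : Type) [Ring H] [HopfAlgebra K H] where
  V : Type
  [addV : AddCommGroup V]
  [modV : Module K V]
  act : H →ₗ[K] V →ₗ[K] V
  act_one : act 1 = LinearMap.id
  act_mul : ∀ a b : H, act (a * b) = (act a) ∘ₗ (act b)

attribute [instance] HLMod.addV HLMod.modV

/-- Morphisms of left `H`-modules. -/
@[ext] structure HLModHom (M N : HLMod K H) where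
  f : M.V →ₗ[K] N.V
  hf : ∀ (h : H) (m : M.V), f (M.act h m) = N.act h (f m)

instance HLMod.instCategory : Category (HLMod K H) where
  Hom M N := HLModHom M N
  id M := ⟨LinearMap.id, by intros; rfl⟩
  comp {M N P} g₁ g₂ := ⟨g₂.f ∘ₗ g₁.f, by
    intro h m
    show g₂.f (g₁.f (M.act h m)) = _
    rw [g₁.hf, g₂.hf]
    rfl⟩
  id_comp := by intros; rfl
  comp_id := by intros; rfl
  assoc := by intros; rfl

/-- The `H`-invariants `M^H = {m | h • m = ε(h) m}` of a left `H`-module. -/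
def HLMod.invariants (M : HLMod K H) : Submodule K M.V where
  carrier := {v | ∀ h : H, M.act h v = Coalgebra.counit (R := K) h • v}
  add_mem' := by
    intro a b ha hb h
    rw [map_add, ha h, hb h, smul_add]
  zero_mem' := by
    intro h
    rw [map_zero, smul_zero]
  smul_mem' := by
    intro k v hv h
    rw [map_smul, hv h, smul_comm]

/-- The `H`-invariants functor `H-Mod ⥤ Vect_K`. -/
def invariantsFunctor : HLMod K H ⥤ ModuleCat K where
  obj M := ModuleCat.of K M.invariants
  map {M N} g := ModuleCat.ofHom (g.f.restrict (p := M.invariants) (q := N.invariants)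
    (by
      intro v hv h
      rw [← g.hf, hv h]
      exact map_smul g.f _ _))
  map_id := by intros; rfl
  map_comp := by intros; rfl

/-- An element of a left `H`-module is locally finite if it generates a finite
dimensional submodule. -/
def HLMod.LocFinElt (M : HLMod K H) (v : M.V) : Prop :=
  FiniteDimensional K (Submodule.span K (Set.range (fun h : H => M.act h v)))

/-- The locally finite part `M^{(H)}` of a left `H`-module. -/
def HLMod.locFin (M : HLMod K H) : Submodule K M.V where
  carrier := {v | M.LocFinElt v}
  add_mem' := by
    intro a b ha hb
    haveI h1 : FiniteDimensional K
        (Submodule.span K (Set.range (fun h : H => M.act h a))) := ha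
    haveI h2 : FiniteDimensional K
        (Submodule.span K (Set.range (fun h : H => M.act h b))) := hb
    have hsub : Set.range (fun h : H => M.act h (a + b)) ⊆
        ↑(Submodule.span K (Set.range (fun h : H => M.act h a)) ⊔
          Submodule.span K (Set.range (fun h : H => M.act h b))) := by
      rintro x ⟨h, rfl⟩
      show M.act h (a + b) ∈ _
      have hadd : M.act h (a + b) = M.act h a + M.act h b := by simp
      rw [hadd]
      exact Submodule.add_mem _
        (Submodule.mem_sup_left (Submodule.subset_span ⟨h, rfl⟩))
        (Submodule.mem_sup_right (Submodule.subset_span ⟨h, rfl⟩))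
    have hle := Submodule.span_le.2 hsub
    haveI h3 : FiniteDimensional K
        ↥(Submodule.span K (Set.range (fun h : H => M.act h a)) ⊔
          Submodule.span K (Set.range (fun h : H => M.act h b))) :=
      Submodule.finiteDimensional_sup _ _
    exact Submodule.finiteDimensional_of_le hle
  zero_mem' := by
    have hsub : Set.range (fun h : H => M.act h (0 : M.V)) ⊆
        ↑(⊥ : Submodule K M.V) := by rintro x ⟨h, rfl⟩; simp
    have hle := Submodule.span_le.2 hsub
    exact Submodule.finiteDimensional_of_le (S₂ := ⊥) hle
  smul_mem' := by
    intro k v hv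
    haveI h1 : FiniteDimensional K
        (Submodule.span K (Set.range (fun h : H => M.act h v))) := hv
    have hsub : Set.range (fun h : H => M.act h (k • v)) ⊆
        ↑(Submodule.span K (Set.range (fun h : H => M.act h v))) := by
      rintro x ⟨h, rfl⟩
      show M.act h (k • v) ∈ _
      have hs : M.act h (k • v) = k • M.act h v := by simp
      rw [hs]
      exact Submodule.smul_mem _ _ (Submodule.subset_span ⟨h, rfl⟩)
    exact Submodule.finiteDimensional_of_le (Submodule.span_le.2 hsub)

/-- A left `H`-module is locally finite iff every element is. -/
def HLMod.IsLocFin (M : HLMod K H) : Prop := ∀ v : M.V, M.LocFinElt v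

end PART4

section PART5
open CategoryTheory.Limits
variable {K : Type} [Field K] {H : Type} [Ring H] [HopfAlgebra K H]

instance {D : LinCat K} (M N : RMod K D) : AddCommGroup (M ⟶ N) :=
  inferInstanceAs (AddCommGroup (RModHom K M N))

instance {D : LinCat K} (M N : RMod K D) : Module K (M ⟶ N) :=
  inferInstanceAs (Module K (RModHom K M N))

/-- Post-composition with a module morphism, as a linear map on `Hom`-spaces. -/
def postcompLin {D : LinCat K} (M : RMod K D) {N P : RMod K D} (θ : N ⟶ P) :
    (M ⟶ N) →ₗ[K] (M ⟶ P) where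
  toFun η := η ≫ θ
  map_add' η ν := by
    apply RModHom.app_injective
    funext X
    apply LinearMap.ext
    intro m
    show θ.app X ((η.app X + ν.app X) m) = θ.app X (η.app X m) + θ.app X (ν.app X m)
    rw [LinearMap.add_apply, map_add]
  map_smul' k η := by
    apply RModHom.app_injective
    funext X
    apply LinearMap.ext
    intro m
    show θ.app X ((k • η.app X) m) = k • θ.app X (η.app X m)
    rw [LinearMap.smul_apply, map_smul]

/-- The (covariant) Hom-functor `Hom(M, -) : Mod-D ⥤ Vect_K` for a module `M` over a
`K`-linear category `D`. -/
def homFunctor {D : LinCat K} (M : RMod K D) : RMod K D ⥤ ModuleCat K where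
  obj N := ModuleCat.of K (M ⟶ N)
  map {N P} θ := ModuleCat.ofHom (postcompLin M θ)
  map_id := by intros; rfl
  map_comp := by intros; rfl

/-- The representable right module `h_X = Hom_D(-, X)`. -/
def reprR (D : LinCat K) (X : D.Obj) : RMod K D where
  ob Y := D.Hom Y X
  map {Y Z} := D.comp (X := Y) (Y := Z) (Z := X)
  map_id Y := by
    apply LinearMap.ext
    intro g
    exact D.id_comp g
  map_comp {Y Z W} f g := by
    apply LinearMap.ext
    intro m
    exact D.assoc f g m

/-- A right module over a `K`-linear category is finitely generated if it admits a
finite family of generators. -/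
def RMod.FG {D : LinCat K} (M : RMod K D) : Prop :=
  ∃ (n : ℕ) (Xs : Fin n → D.Obj) (ms : ∀ i, M.ob (Xs i)),
    ∀ (Y : D.Obj) (y : M.ob Y), ∃ f : ∀ i, D.Hom Y (Xs i),
      y = ∑ i, M.map (f i) (ms i)

/-- A submodule of a right module over a `K`-linear category. -/
@[ext] structure RSubmod {D : LinCat K} (M : RMod K D) where
  sub : ∀ X, Submodule K (M.ob X)
  closed : ∀ {X Y : D.Obj} (f : D.Hom X Y) (m : M.ob Y), m ∈ sub Y → M.map f m ∈ sub X

instance {D : LinCat K} (M : RMod K D) : PartialOrder (RSubmod M) where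
  le A B := ∀ X, A.sub X ≤ B.sub X
  le_refl A X := le_rfl
  le_trans A B C hab hbc X := (hab X).trans (hbc X)
  le_antisymm A B hab hba := by
    ext X x
    exact ⟨fun h => hab X h, fun h => hba X h⟩

/-- A right module over a `K`-linear category is noetherian if its submodules satisfy
the ascending chain condition. -/
def RMod.Noetherian {D : LinCat K} (M : RMod K D) : Prop :=
  ∀ f : ℕ →o RSubmod M, ∃ n, ∀ m, n ≤ m → f m = f n

/-- A `K`-linear category is right noetherian if all the representable right modules
are noetherian. -/
def LinCat.RightNoetherian (D : LinCat K) : Prop :=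
  ∀ X : D.Obj, (reprR D X).Noetherian

/-- A left `H`-category is `H`-locally finite if all its `Hom`-spaces are locally
finite `H`-modules. -/
def LeftHCat.LocFin (C : LeftHCat K H) : Prop :=
  ∀ (X Y : C.Obj) (f : C.Hom X Y),
    FiniteDimensional K (Submodule.span K (Set.range (fun h : H => C.act X Y h f)))

/-- A right `C#H`-module is `H`-locally finite (i.e. belongs to `mod-(C#H)`) if each of
its values is a locally finite `H`-module for the canonical `H`-action. -/
def RMod.HLocFin {C : LeftHCat K H} {S : SmashCat C} (M : RMod K S.lin) : Prop :=
  ∀ (X : C.Obj) (v : M.ob X),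
    FiniteDimensional K (Submodule.span K (Set.range (fun h : H => actOn S M X h v)))

/-- The property of being a Grothendieck category: abelian, cocomplete, with exact
filtered colimits (AB5) and a separator. -/
def IsGrothendieckCat (A : Type*) [Category A] : Prop :=
  ∃ (_ : Abelian A) (_ : HasColimits A) (hf : HasFilteredColimits A),
    @AB5 A _ hf ∧ ∃ G : A, IsSeparator G

end PART5

section PART6
open CategoryTheory.Limits ZeroObject

/-- A first-quadrant cohomological spectral sequence in an abelian category `A`,
with second page `E₂` and converging to the graded abutment `abut`. -/
structure FirstQuadrantCohomSS (A : Type*) [Category A] [Abelian A]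
    (E₂ : ℤ → ℤ → A) (abut : ℤ → A) where
  /-- the pages of the spectral sequence, defined for `r ≥ 2` -/
  page : ℕ → ℤ → ℤ → A
  /-- the second page is the given `E₂` -/
  pageTwo : ∀ p q : ℤ, 0 ≤ p → 0 ≤ q → (page 2 p q ≅ E₂ p q)
  /-- first quadrant: pages vanish outside `p, q ≥ 0` -/
  vanish : ∀ (r : ℕ) (p q : ℤ), p < 0 ∨ q < 0 → IsZero (page r p q)
  /-- the differentials, of bidegree `(r, 1 - r)` -/
  d : ∀ (r : ℕ) (p q : ℤ), page r p q ⟶ page r (p + r) (q + 1 - r)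
  d_comp_d : ∀ (r : ℕ) (p q : ℤ), d r p q ≫ d r (p + r) (q + 1 - r) = 0
  /-- each page is the homology of the previous one -/
  turn : ∀ (r : ℕ) (p q : ℤ), 2 ≤ r →
    (page (r + 1) (p + r) (q + 1 - r) ≅
      (CategoryTheory.ShortComplex.mk (d r p q) (d r (p + r) (q + 1 - r))
        (d_comp_d r p q)).homology)
  /-- the page at which position `(p,q)` has stabilized -/
  stab : ℤ → ℤ → ℕ
  stab_ge : ∀ p q, 2 ≤ stab p q
  hstab : ∀ (p q : ℤ) (r : ℕ), stab p q ≤ r →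
    Nonempty (page r p q ≅ page (stab p q) p q)
  /-- a (finite, exhaustive) decreasing filtration on each piece of the abutment -/
  filt : ∀ n : ℤ, ℤ → Subobject (abut n)
  filt_antitone : ∀ n, Antitone (filt n)
  filt_top : ∀ (n p : ℤ), 0 ≤ n → p ≤ 0 → filt n p = ⊤
  filt_bot : ∀ (n p : ℤ), 0 ≤ n → n < p → filt n p = ⊥
  /-- the graded pieces of the filtration are the stable values of the pages -/
  graded : ∀ (n p : ℤ), 0 ≤ p → p ≤ n →
    Nonempty ((cokernel (Subobject.ofLE (filt n (p + 1)) (filt n p)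
      (filt_antitone n (by omega)))) ≅ page (stab p (n - p)) p (n - p))

end PART6

section PART7
open CategoryTheory.Limits
variable (K : Type) [Field K] (H : Type) [Ring H] [HopfAlgebra K H]

/-- The property that a linear map `V →ₗ V ⊗ H` is a (counital, coassociative) right
`H`-comodule structure. -/
def IsComodStr (V : Type) [AddCommGroup V] [Module K V]
    (coact : V →ₗ[K] V ⊗[K] H) : Prop :=
  ((TensorProduct.rid K V).toLinearMap ∘ₗ
      (LinearMap.lTensor V (Coalgebra.counit (R := K) (A := H))) ∘ₗ coact = LinearMap.id) ∧
  ((TensorProduct.assoc K V H H).toLinearMap ∘ₗ (LinearMap.rTensor H coact) ∘ₗ coact =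
      (LinearMap.lTensor V (Coalgebra.comul (R := K) (A := H))) ∘ₗ coact)

/-- A right `H`-comodule (an object of `Comod-H`). -/
structure HComod where
  V : Type
  [addV : AddCommGroup V]
  [modV : Module K V]
  coact : V →ₗ[K] V ⊗[K] H
  isComod : IsComodStr K H V coact

attribute [instance] HComod.addV HComod.modV

variable {K H}

/-- Morphisms of right `H`-comodules. -/
@[ext] structure HComodHom (M N : HComod K H) where
  f : M.V →ₗ[K] N.V
  hf : ∀ m : M.V, N.coact (f m) = (LinearMap.rTensor H f) (M.coact m)

instance HComod.instCategory : Category (HComod K H) where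
  Hom M N := HComodHom M N
  id M := ⟨LinearMap.id, by
    intro m
    show M.coact m = (LinearMap.rTensor H LinearMap.id) (M.coact m)
    rw [LinearMap.rTensor_id]
    rfl⟩
  comp {M N P} g₁ g₂ := ⟨g₂.f ∘ₗ g₁.f, by
    intro m
    show P.coact (g₂.f (g₁.f m)) = _
    rw [g₂.hf, g₁.hf]
    rw [← LinearMap.comp_apply, ← LinearMap.rTensor_comp]⟩
  id_comp := by intros; rfl
  comp_id := by intros; rfl
  assoc := by intros; rfl

/-- The `H`-coinvariants `M^{coH} = {m | ρ(m) = m ⊗ 1}` of a right `H`-comodule. -/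
def HComod.coinvariants (M : HComod K H) : Submodule K M.V where
  carrier := {v | M.coact v = v ⊗ₜ[K] (1 : H)}
  add_mem' := by
    intro a b ha hb
    show M.coact (a + b) = (a + b) ⊗ₜ[K] (1 : H)
    rw [map_add, ha, hb, TensorProduct.add_tmul]
  zero_mem' := by
    show M.coact 0 = (0 : M.V) ⊗ₜ[K] (1 : H)
    rw [map_zero, TensorProduct.zero_tmul]
  smul_mem' := by
    intro k v hv
    show M.coact (k • v) = (k • v) ⊗ₜ[K] (1 : H)
    rw [map_smul, hv, TensorProduct.smul_tmul']

/-- The `H`-coinvariants functor `Comod-H ⥤ Vect_K`. -/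
def coinvariantsFunctor : HComod K H ⥤ ModuleCat K where
  obj M := ModuleCat.of K M.coinvariants
  map {M N} g := ModuleCat.ofHom (g.f.restrict (p := M.coinvariants) (q := N.coinvariants)
    (by
      intro v hv
      show N.coact (g.f v) = g.f v ⊗ₜ[K] 1
      rw [g.hf, hv]
      simp))
  map_id := by intros; rfl
  map_comp := by intros; rfl

variable (K H)

/-- A right co-`H`-category: a `K`-linear category enriched in right `H`-comodules,
i.e. `ρ(id_X) = id_X ⊗ 1` and `ρ(v ∘ u) = ∑ v₀ ∘ u₀ ⊗ v₁ u₁`. -/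
structure CoHCat extends LinCat K where
  coact : ∀ X Y, Hom X Y →ₗ[K] Hom X Y ⊗[K] H
  isComod : ∀ X Y, IsComodStr K H (Hom X Y) (coact X Y)
  coact_idm : ∀ X, coact X X (idm X) = (idm X) ⊗ₜ[K] (1 : H)
  coact_comp : ∀ {X Y Z : Obj} (u : Hom X Y) (v : Hom Y Z),
    coact X Z (comp u v) =
      ((TensorProduct.map (TensorProduct.lift (comp (X := X) (Y := Y) (Z := Z)))
          ((LinearMap.mul' K H) ∘ₗ (TensorProduct.comm K H H).toLinearMap)) ∘ₗ
        (TensorProduct.tensorTensorTensorComm K (Hom X Y) H (Hom Y Z) H).toLinearMap)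
      ((coact X Y u) ⊗ₜ[K] (coact Y Z v))

variable {K H}

/-- A left module over a `K`-linear category: a `K`-linear covariant functor to
vector spaces. -/
structure LMod (D : LinCat K) where
  ob : D.Obj → Type
  [addOb : ∀ X, AddCommGroup (ob X)]
  [modOb : ∀ X, Module K (ob X)]
  map : ∀ {X Y : D.Obj}, D.Hom X Y →ₗ[K] (ob X →ₗ[K] ob Y)
  map_id : ∀ X, map (D.idm X) = LinearMap.id
  map_comp : ∀ {X Y Z : D.Obj} (f : D.Hom X Y) (g : D.Hom Y Z),
    map (D.comp f g) = (map g) ∘ₗ (map f)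

attribute [instance] LMod.addOb LMod.modOb

/-- A morphism of left modules over a `K`-linear category. -/
@[ext] structure LModHom {D : LinCat K} (M N : LMod D) where
  app : ∀ X, M.ob X →ₗ[K] N.ob X
  natural : ∀ {X Y : D.Obj} (f : D.Hom X Y) (m : M.ob X),
    app Y (M.map f m) = N.map f (app X m)

instance LMod.instCategory (D : LinCat K) : Category (LMod D) where
  Hom M N := LModHom M N
  id M := ⟨fun _ => LinearMap.id, by intros; rfl⟩
  comp η θ := ⟨fun X => (θ.app X).comp (η.app X), by
    intro X Y f m
    simp only [LinearMap.comp_apply, η.natural, θ.natural]⟩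
  id_comp := by intros; rfl
  comp_id := by intros; rfl
  assoc := by intros; rfl

/-- The representable left module `ₓh = Hom_D(X, -)`. -/
def reprL (D : LinCat K) (X : D.Obj) : LMod D where
  ob Y := D.Hom X Y
  map {Y Z} := (D.comp (X := X) (Y := Y) (Z := Z)).flip
  map_id Y := by
    apply LinearMap.ext
    intro g
    exact D.comp_id g
  map_comp {Y Z W} f g := by
    apply LinearMap.ext
    intro m
    exact (D.assoc m f g).symm

/-- A left module over a `K`-linear category is finitely generated if it admits a
finite family of generators. -/
def LMod.FG {D : LinCat K} (M : LMod D) : Prop :=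
  ∃ (n : ℕ) (Xs : Fin n → D.Obj) (ms : ∀ i, M.ob (Xs i)),
    ∀ (Y : D.Obj) (y : M.ob Y), ∃ f : ∀ i, D.Hom (Xs i) Y,
      y = ∑ i, M.map (f i) (ms i)

/-- A submodule of a left module over a `K`-linear category. -/
@[ext] structure LSubmod {D : LinCat K} (M : LMod D) where
  sub : ∀ X, Submodule K (M.ob X)
  closed : ∀ {X Y : D.Obj} (f : D.Hom X Y) (m : M.ob X), m ∈ sub X → M.map f m ∈ sub Y

instance {D : LinCat K} (M : LMod D) : PartialOrder (LSubmod M) where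
  le A B := ∀ X, A.sub X ≤ B.sub X
  le_refl A X := le_rfl
  le_trans A B C hab hbc X := (hab X).trans (hbc X)
  le_antisymm A B hab hba := by
    ext X x
    exact ⟨fun h => hab X h, fun h => hba X h⟩

/-- A left module is noetherian if its submodules satisfy the ascending chain
condition. -/
def LMod.Noetherian {D : LinCat K} (M : LMod D) : Prop :=
  ∀ f : ℕ →o LSubmod M, ∃ n, ∀ m, n ≤ m → f m = f n

/-- A `K`-linear category is left noetherian if all representable left modules are
noetherian. -/
def LinCat.LeftNoetherian (D : LinCat K) : Prop :=
  ∀ X : D.Obj, (reprL D X).Noetherian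

/-- The Sweedler right-hand side `∑ M(f₀)(m₀) ⊗ f₁ m₁` of the compatibility condition
for relative `(D,H)`-Hopf modules. -/
def relHopfRHS {D : CoHCat K H} (M : LMod D.toLinCat)
    {X Y : D.Obj} (ρf : D.Hom X Y ⊗[K] H) (ρm : M.ob X ⊗[K] H) : M.ob Y ⊗[K] H :=
  ((TensorProduct.map (TensorProduct.lift (M.map (X := X) (Y := Y)))
      (LinearMap.mul' K H)) ∘ₗ
    (TensorProduct.tensorTensorTensorComm K (D.Hom X Y) H (M.ob X) H).toLinearMap)
  (ρf ⊗ₜ[K] ρm)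

/-- A relative `(D,H)`-Hopf module over a right co-`H`-category `D`. -/
structure RelHopfMod (D : CoHCat K H) extends LMod D.toLinCat where
  coact : ∀ X, ob X →ₗ[K] ob X ⊗[K] H
  isComod : ∀ X, IsComodStr K H (ob X) (coact X)
  compat : ∀ {X Y : D.Obj} (f : D.Hom X Y) (m : ob X),
    coact Y (map f m) = relHopfRHS toLMod (D.coact X Y f) (coact X m)

/-- Morphisms of relative `(D,H)`-Hopf modules: `D`-module morphisms whose components
are `H`-colinear. -/
@[ext] structure RelHopfHom {D : CoHCat K H} (M N : RelHopfMod D) where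
  hom : M.toLMod ⟶ N.toLMod
  colin : ∀ (X : D.Obj) (m : M.ob X),
    N.coact X (hom.app X m) = (LinearMap.rTensor H (hom.app X)) (M.coact X m)

instance RelHopfMod.instCategory (D : CoHCat K H) : Category (RelHopfMod D) where
  Hom M N := RelHopfHom M N
  id M := ⟨𝟙 M.toLMod, by
    intro X m
    show M.coact X m = (LinearMap.rTensor H LinearMap.id) (M.coact X m)
    rw [LinearMap.rTensor_id]
    rfl⟩
  comp {M N P} η θ := ⟨η.hom ≫ θ.hom, by
    intro X m
    show P.coact X (θ.hom.app X (η.hom.app X m)) = _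
    rw [θ.colin, η.colin, ← LinearMap.comp_apply, ← LinearMap.rTensor_comp]
    rfl⟩
  id_comp := by intros; rfl
  comp_id := by intros; rfl
  assoc := by intros; rfl

namespace LModHom

variable {D : LinCat K} {M N : LMod D}

instance : Zero (LModHom M N) := ⟨⟨fun _ => 0, by intros; simp⟩⟩

instance : Add (LModHom M N) :=
  ⟨fun η ν => ⟨fun X => η.app X + ν.app X, by
    intro X Y f m
    simp [η.natural, ν.natural]⟩⟩

instance : Neg (LModHom M N) :=
  ⟨fun η => ⟨fun X => -η.app X, by intro X Y f m; simp [η.natural]⟩⟩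

instance : Sub (LModHom M N) :=
  ⟨fun η ν => ⟨fun X => η.app X - ν.app X, by
    intro X Y f m
    simp [η.natural, ν.natural]⟩⟩

instance : SMul K (LModHom M N) :=
  ⟨fun k η => ⟨fun X => k • η.app X, by intro X Y f m; simp [η.natural]⟩⟩

instance : SMul ℕ (LModHom M N) :=
  ⟨fun n η => ⟨fun X => n • η.app X, by intro X Y f m; simp [η.natural]⟩⟩

instance : SMul ℤ (LModHom M N) :=
  ⟨fun n η => ⟨fun X => n • η.app X, by intro X Y f m; simp [η.natural]⟩⟩

theorem app_injective :
    Function.Injective (fun (η : LModHom M N) => η.app) := by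
  intro η ν h; ext X m; exact congrFun (congrArg (fun u => (u X : M.ob X → N.ob X)) h) m

instance : AddCommGroup (LModHom M N) :=
  Function.Injective.addCommGroup (fun η => η.app) app_injective
    rfl (fun _ _ => rfl) (fun _ => rfl) (fun _ _ => rfl) (fun _ _ => rfl) (fun _ _ => rfl)

instance : Module K (LModHom M N) :=
  Function.Injective.module K
    ⟨⟨fun η => η.app, rfl⟩, fun _ _ => rfl⟩ app_injective (fun _ _ => rfl)

end LModHom

instance {D : LinCat K} (M N : LMod D) : AddCommGroup (M ⟶ N) :=
  inferInstanceAs (AddCommGroup (LModHom M N))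

instance {D : LinCat K} (M N : LMod D) : Module K (M ⟶ N) :=
  inferInstanceAs (Module K (LModHom M N))

/-- Post-composition with a module morphism, as a linear map on `Hom`-spaces. -/
def postcompLinL {D : LinCat K} (M : LMod D) {N P : LMod D} (θ : N ⟶ P) :
    (M ⟶ N) →ₗ[K] (M ⟶ P) where
  toFun η := η ≫ θ
  map_add' η ν := by
    apply LModHom.app_injective
    funext X
    apply LinearMap.ext
    intro m
    show θ.app X ((η.app X + ν.app X) m) = θ.app X (η.app X m) + θ.app X (ν.app X m)
    rw [LinearMap.add_apply, map_add]
  map_smul' k η := by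
    apply LModHom.app_injective
    funext X
    apply LinearMap.ext
    intro m
    show θ.app X ((k • η.app X) m) = k • θ.app X (η.app X m)
    rw [LinearMap.smul_apply, map_smul]

/-- The (covariant) Hom-functor `Hom(M, -) : D-Mod ⥤ Vect_K` for a left module `M` over
a `K`-linear category `D`. -/
def homFunctorL {D : LinCat K} (M : LMod D) : LMod D ⥤ ModuleCat K where
  obj N := ModuleCat.of K (M ⟶ N)
  map {N P} θ := ModuleCat.ofHom (postcompLinL M θ)
  map_id := by intros; rfl
  map_comp := by intros; rfl

end PART7

section S5Aux
open CategoryTheory.Limits Coalgebra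

variable {K : Type} [Field K] {H : Type} [Ring H] [HopfAlgebra K H]

namespace S5

/-- A Sweedler representation of `1`. -/
def reprOne : Coalgebra.Repr K (1 : H) ℕ where
  index := ({0} : Finset ℕ)
  left _ := 1
  right _ := 1
  eq := by simp [Algebra.TensorProduct.one_def]

@[simp] lemma reprOne_index : (reprOne (K := K) (H := H)).index = ({0} : Finset ℕ) := rfl
@[simp] lemma reprOne_left (i : ℕ) : (reprOne (K := K) (H := H)).left i = 1 := rfl
@[simp] lemma reprOne_right (i : ℕ) : (reprOne (K := K) (H := H)).right i = 1 := rfl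

/-- A Sweedler representation of a product. -/
def reprMul {x y : H} {ι₁ ι₂ : Type*} (rx : Coalgebra.Repr K x ι₁) (ry : Coalgebra.Repr K y ι₂) :
    Coalgebra.Repr K (x * y) (ι₁ × ι₂) where
  index := rx.index ×ˢ ry.index
  left p := rx.left p.1 * ry.left p.2
  right p := rx.right p.1 * ry.right p.2
  eq := by
    rw [show CoalgebraStruct.comul (R := K) (x * y) = comul x * comul y from
      Bialgebra.comul_mul x y, ← rx.eq, ← ry.eq, Finset.sum_mul_sum]
    rw [Finset.sum_product]
    simp [Algebra.TensorProduct.tmul_mul_tmul]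

lemma sum_counit_smul {k : H} {ι : Type*} (r : Coalgebra.Repr K k ι) :
    ∑ i ∈ r.index, Coalgebra.counit (R := K) (r.left i) • r.right i = k := by
  have h := Coalgebra.sum_counit_tmul_eq (R := K) r
  have h2 := congrArg (TensorProduct.lid K H) h
  rw [map_sum] at h2
  simp only [TensorProduct.lid_tmul, one_smul] at h2
  exact h2

variable {V W : Type} [AddCommGroup V] [Module K V] [AddCommGroup W] [Module K W]

/-- The generic "Sweedler twist" `v ⊗ k ↦ ∑ Φ k₍₁₎ v ⊗ ψ k₍₂₎`. -/
def swee (Φ : H →ₗ[K] V →ₗ[K] W) (ψ : H →ₗ[K] H) : V ⊗[K] H →ₗ[K] W ⊗[K] H :=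
  (TensorProduct.map (TensorProduct.lift Φ.flip) ψ) ∘ₗ
    (TensorProduct.assoc K V H H).symm.toLinearMap ∘ₗ (LinearMap.lTensor V Coalgebra.comul)

lemma swee_tmul (Φ : H →ₗ[K] V →ₗ[K] W) (ψ : H →ₗ[K] H) (v : V) (k : H) {ι : Type*}
    (r : Coalgebra.Repr K k ι) :
    swee Φ ψ (v ⊗ₜ[K] k) = ∑ i ∈ r.index, Φ (r.left i) v ⊗ₜ[K] ψ (r.right i) := by
  simp only [swee, LinearMap.comp_apply, LinearMap.lTensor_tmul]
  rw [show CoalgebraStruct.comul (R := K) k = ∑ i ∈ r.index, r.left i ⊗ₜ[K] r.right i from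
    r.eq.symm]
  simp [TensorProduct.tmul_sum, map_sum]

lemma swee_add_left (Φ Φ' : H →ₗ[K] V →ₗ[K] W) (ψ : H →ₗ[K] H) :
    swee (Φ + Φ') ψ = swee Φ ψ + swee Φ' ψ := by
  apply TensorProduct.ext'
  intro v k
  rw [LinearMap.add_apply]
  rw [swee_tmul _ _ _ _ (ℛ K k), swee_tmul _ _ _ _ (ℛ K k), swee_tmul _ _ _ _ (ℛ K k)]
  simp [TensorProduct.add_tmul, Finset.sum_add_distrib]

lemma swee_smul_left (c : K) (Φ : H →ₗ[K] V →ₗ[K] W) (ψ : H →ₗ[K] H) :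
    swee (c • Φ) ψ = c • swee Φ ψ := by
  apply TensorProduct.ext'
  intro v k
  rw [LinearMap.smul_apply]
  rw [swee_tmul _ _ _ _ (ℛ K k), swee_tmul _ _ _ _ (ℛ K k)]
  simp [TensorProduct.smul_tmul', Finset.smul_sum]

lemma swee_add_right (Φ : H →ₗ[K] V →ₗ[K] W) (ψ ψ' : H →ₗ[K] H) :
    swee Φ (ψ + ψ') = swee Φ ψ + swee Φ ψ' := by
  apply TensorProduct.ext'
  intro v k
  rw [LinearMap.add_apply]
  rw [swee_tmul _ _ _ _ (ℛ K k), swee_tmul _ _ _ _ (ℛ K k), swee_tmul _ _ _ _ (ℛ K k)]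
  simp [TensorProduct.tmul_add, Finset.sum_add_distrib]

lemma swee_smul_right (c : K) (Φ : H →ₗ[K] V →ₗ[K] W) (ψ : H →ₗ[K] H) :
    swee Φ (c • ψ) = c • swee Φ ψ := by
  apply TensorProduct.ext'
  intro v k
  rw [LinearMap.smul_apply]
  rw [swee_tmul _ _ _ _ (ℛ K k), swee_tmul _ _ _ _ (ℛ K k)]
  simp [TensorProduct.tmul_smul, Finset.smul_sum]

/-- A trilinear map `x y z ↦ Q y (P x) ⊗ R z`. -/
def mk₃ {V₁ V₂ : Type} [AddCommGroup V₁] [Module K V₁] [AddCommGroup V₂] [Module K V₂]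
    (P : H →ₗ[K] V₁) (Q : H →ₗ[K] V₁ →ₗ[K] V₂) (R : H →ₗ[K] H) :
    H →ₗ[K] H →ₗ[K] H →ₗ[K] V₂ ⊗[K] H :=
  ((LinearMap.llcomp K H V₂ (H →ₗ[K] V₂ ⊗[K] H))
      ((LinearMap.lcomp K (V₂ ⊗[K] H) R) ∘ₗ (TensorProduct.mk K V₂ H)) ∘ₗ Q.flip) ∘ₗ P

@[simp] lemma mk₃_apply {V₁ V₂ : Type} [AddCommGroup V₁] [Module K V₁] [AddCommGroup V₂]
    [Module K V₂] (P : H →ₗ[K] V₁) (Q : H →ₗ[K] V₁ →ₗ[K] V₂) (R : H →ₗ[K] H) (x y z : H) :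
    mk₃ P Q R x y z = Q y (P x) ⊗ₜ[K] R z := rfl

lemma sum_trilinear_eq (L : H →ₗ[K] H →ₗ[K] H →ₗ[K] W) {k : H} {ι : Type*} {κ Λ : ι → Type*} (r : Coalgebra.Repr K k ι)
    (a₁ : ∀ i : r.ι, Coalgebra.Repr K (r.left i) (κ i))
    (a₂ : ∀ i : r.ι, Coalgebra.Repr K (r.right i) (Λ i)) :
    ∑ i ∈ r.index, ∑ j ∈ (a₁ i).index, L ((a₁ i).left j) ((a₁ i).right j) (r.right i)
      = ∑ i ∈ r.index, ∑ j ∈ (a₂ i).index, L (r.left i) ((a₂ i).left j) ((a₂ i).right j) := by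
  have h := Coalgebra.sum_tmul_tmul_eq (R := K) r a₁ a₂
  have h2 := congrArg
    (TensorProduct.lift ((TensorProduct.lift.equiv (RingHom.id K) H H W).toLinearMap ∘ₗ L)) h
  simpa [map_sum, TensorProduct.lift.equiv_apply] using h2

section Ind
variable {C : LeftHCat K H} (S : SmashCat C)

/-- The `C#H`-action on the induced module `M ⊗ H`:
`(m ⊗ k) · (g # h') = ∑ (M (k₍₁₎ g) m) ⊗ (k₍₂₎ h')`. -/
def indMap (M : RMod K C.toLinCat) {X Y : C.Obj} :
    (C.Hom X Y ⊗[K] H) →ₗ[K] (M.ob Y ⊗[K] H) →ₗ[K] (M.ob X ⊗[K] H) :=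
  TensorProduct.lift <| LinearMap.mk₂ K
    (fun g h' => swee (M.map ∘ₗ (C.act X Y).flip g) (LinearMap.mulRight K h'))
    (fun g g' h' => by
      show swee (M.map ∘ₗ (C.act X Y).flip (g + g')) (LinearMap.mulRight K h')
        = swee (M.map ∘ₗ (C.act X Y).flip g) (LinearMap.mulRight K h')
          + swee (M.map ∘ₗ (C.act X Y).flip g') (LinearMap.mulRight K h')
      rw [map_add, LinearMap.comp_add, swee_add_left])
    (fun c g h' => by
      show swee (M.map ∘ₗ (C.act X Y).flip (c • g)) (LinearMap.mulRight K h')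
        = c • swee (M.map ∘ₗ (C.act X Y).flip g) (LinearMap.mulRight K h')
      rw [map_smul, LinearMap.comp_smul, swee_smul_left])
    (fun g h' h'' => by
      show swee (M.map ∘ₗ (C.act X Y).flip g) (LinearMap.mulRight K (h' + h''))
        = swee (M.map ∘ₗ (C.act X Y).flip g) (LinearMap.mulRight K h')
          + swee (M.map ∘ₗ (C.act X Y).flip g) (LinearMap.mulRight K h'')
      rw [show LinearMap.mulRight K (h' + h'') =
        LinearMap.mulRight K h' + LinearMap.mulRight K h'' from by ext x; simp [mul_add],
        swee_add_right])
    (fun c g h' => by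
      show swee (M.map ∘ₗ (C.act X Y).flip g) (LinearMap.mulRight K (c • h'))
        = c • swee (M.map ∘ₗ (C.act X Y).flip g) (LinearMap.mulRight K h')
      rw [show LinearMap.mulRight K (c • h') = c • LinearMap.mulRight K h' from by
        ext x; simp [mul_smul_comm], swee_smul_right])

lemma indMap_tmul (M : RMod K C.toLinCat) {X Y : C.Obj} (g : C.Hom X Y) (h' : H)
    (m : M.ob Y) (k : H) {ι : Type*} (r : Coalgebra.Repr K k ι) :
    indMap M (g ⊗ₜ[K] h') (m ⊗ₜ[K] k)
      = ∑ i ∈ r.index, M.map (C.act X Y (r.left i) g) m ⊗ₜ[K] (r.right i * h') := by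
  simp only [indMap, TensorProduct.lift.tmul, LinearMap.mk₂_apply]
  rw [swee_tmul _ _ _ _ r]
  simp [LinearMap.comp_apply, LinearMap.flip_apply, LinearMap.mulRight_apply]

lemma indMap_tmul_one (M : RMod K C.toLinCat) {X Y : C.Obj} (g : C.Hom X Y) (h' : H)
    (m : M.ob Y) :
    indMap M (g ⊗ₜ[K] h') (m ⊗ₜ[K] (1 : H)) = M.map g m ⊗ₜ[K] h' := by
  rw [indMap_tmul M g h' m 1 reprOne]
  simp [C.act_one]

lemma comp_tmul_repr {X Y Z : C.Obj} (u : C.Hom X Y) (a : H) (v : C.Hom Y Z) (b : H)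
    {ι : Type*} (rb : Coalgebra.Repr K b ι) :
    S.comp (u ⊗ₜ[K] a) (v ⊗ₜ[K] b)
      = ∑ s ∈ rb.index, C.comp (C.act X Y (rb.left s) u) v ⊗ₜ[K] (rb.right s * a) := by
  rw [S.comp_tmul,
    show CoalgebraStruct.comul (R := K) b = ∑ s ∈ rb.index, rb.left s ⊗ₜ[K] rb.right s
      from rb.eq.symm]
  simp [map_sum, LinearMap.comp_apply, LinearMap.flip_apply]

lemma act_comp_repr {X Y Z : C.Obj} (h : H) (u : C.Hom X Y) (v : C.Hom Y Z)
    {ι : Type*} (rh : Coalgebra.Repr K h ι) :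
    C.act X Z h (C.comp u v)
      = ∑ j ∈ rh.index, C.comp (C.act X Y (rh.right j) u) (C.act Y Z (rh.left j) v) := by
  rw [C.act_comp,
    show CoalgebraStruct.comul (R := K) h = ∑ j ∈ rh.index, rh.left j ⊗ₜ[K] rh.right j
      from rh.eq.symm]
  simp [map_sum, LinearMap.flip_apply]

lemma indMap_comp (M : RMod K C.toLinCat) {X Y Z : C.Obj}
    (f : C.Hom X Y ⊗[K] H) (g : C.Hom Y Z ⊗[K] H) :
    indMap M (S.comp f g) = (indMap M f) ∘ₗ (indMap M g) := by
  have key : ∀ (u : C.Hom X Y) (a : H) (v : C.Hom Y Z) (b : H),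
      indMap M (S.comp (u ⊗ₜ[K] a) (v ⊗ₜ[K] b))
        = (indMap M (u ⊗ₜ[K] a)) ∘ₗ (indMap M (v ⊗ₜ[K] b)) := by
    intro u a v b
    apply TensorProduct.ext'
    intro m k
    set r := ℛ K k with hr
    set rb := ℛ K b with hrb
    set a₁ : ∀ i : r.ι, Coalgebra.Repr K (r.left i) (H × H) := fun i => ℛ K (r.left i) with ha₁
    set a₂ : ∀ i : r.ι, Coalgebra.Repr K (r.right i) (H × H) := fun i => ℛ K (r.right i) with ha₂
    -- the trilinear comparison maps, one for each `s`
    set P : H →ₗ[K] M.ob Y := (M.map ∘ₗ (C.act Y Z).flip v).flip m with hP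
    set Q : rb.ι → (H →ₗ[K] M.ob Y →ₗ[K] M.ob X) :=
      fun s => M.map ∘ₗ (C.act X Y).flip (C.act X Y (rb.left s) u) with hQ
    set R : rb.ι → (H →ₗ[K] H) :=
      fun s => (LinearMap.mulRight K a) ∘ₗ (LinearMap.mulRight K (rb.right s)) with hR
    have lhs_eq : indMap M (S.comp (u ⊗ₜ[K] a) (v ⊗ₜ[K] b)) (m ⊗ₜ[K] k)
        = ∑ s ∈ rb.index, ∑ i ∈ r.index, ∑ j ∈ (a₁ i).index,
            mk₃ P (Q s) (R s) ((a₁ i).left j) ((a₁ i).right j) (r.right i) := by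
      rw [comp_tmul_repr S u a v b rb, map_sum, LinearMap.sum_apply]
      refine Finset.sum_congr rfl fun s _ => ?_
      rw [indMap_tmul M _ _ m k r]
      refine Finset.sum_congr rfl fun i _ => ?_
      rw [act_comp_repr _ _ _ (a₁ i), map_sum, LinearMap.sum_apply,
        TensorProduct.sum_tmul]
      refine Finset.sum_congr rfl fun j _ => ?_
      have hcomp : M.map (C.comp (C.act X Y ((a₁ i).right j) (C.act X Y (rb.left s) u))
            (C.act Y Z ((a₁ i).left j) v)) m
          = M.map (C.act X Y ((a₁ i).right j) (C.act X Y (rb.left s) u))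
              (M.map (C.act Y Z ((a₁ i).left j) v) m) := by
        rw [M.map_comp]; rfl
      rw [hcomp]
      simp only [mk₃_apply, hP, hQ, hR, LinearMap.comp_apply, LinearMap.flip_apply,
        LinearMap.mulRight_apply]
      rw [mul_assoc]
    have rhs_eq : ((indMap M (u ⊗ₜ[K] a)) ∘ₗ (indMap M (v ⊗ₜ[K] b))) (m ⊗ₜ[K] k)
        = ∑ s ∈ rb.index, ∑ i ∈ r.index, ∑ j ∈ (a₂ i).index,
            mk₃ P (Q s) (R s) (r.left i) ((a₂ i).left j) ((a₂ i).right j) := by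
      rw [LinearMap.comp_apply, indMap_tmul M v b m k r, map_sum]
      have step1 : ∀ i ∈ r.index,
          indMap M (u ⊗ₜ[K] a) (M.map (C.act Y Z (r.left i) v) m ⊗ₜ[K] (r.right i * b))
            = ∑ s ∈ rb.index, ∑ j ∈ (a₂ i).index,
                mk₃ P (Q s) (R s) (r.left i) ((a₂ i).left j) ((a₂ i).right j) := by
        intro i _
        rw [indMap_tmul M u a _ _ (reprMul (a₂ i) rb)]
        refine Eq.trans (Finset.sum_product ((a₂ i).index) (rb.index)
          (fun p => M.map (C.act X Y ((a₂ i).left p.1 * rb.left p.2) u)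
            (M.map (C.act Y Z (r.left i) v) m)
              ⊗ₜ[K] ((a₂ i).right p.1 * rb.right p.2 * a))) ?_
        rw [Finset.sum_comm]
        refine Finset.sum_congr rfl fun s _ => Finset.sum_congr rfl fun j _ => ?_
        show M.map (C.act X Y ((a₂ i).left j * rb.left s) u)
              (M.map (C.act Y Z (r.left i) v) m)
            ⊗ₜ[K] ((a₂ i).right j * rb.right s * a) = _
        simp only [mk₃_apply, hP, hQ, hR, LinearMap.comp_apply, LinearMap.flip_apply,
          LinearMap.mulRight_apply, C.act_mul]
      rw [Finset.sum_congr rfl step1, Finset.sum_comm]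
    rw [lhs_eq, rhs_eq]
    exact Finset.sum_congr rfl fun s _ => sum_trilinear_eq (mk₃ P (Q s) (R s)) r a₁ a₂
  induction f using TensorProduct.induction_on with
  | zero => show indMap M (S.comp 0 g) = (indMap M 0) ∘ₗ (indMap M g); simp
  | tmul u a =>
    induction g using TensorProduct.induction_on with
    | zero =>
      show indMap M (S.comp _ 0) = (indMap M _) ∘ₗ (indMap M 0); simp
    | tmul v b => exact key u a v b
    | add g₁ g₂ ih₁ ih₂ =>
      show indMap M (S.comp _ (g₁ + g₂)) = (indMap M _) ∘ₗ (indMap M (g₁ + g₂))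
      rw [map_add, map_add, map_add]
      show _ = _ ∘ₗ (indMap M g₁ + indMap M g₂)
      rw [LinearMap.comp_add, ← ih₁, ← ih₂]
  | add f₁ f₂ ih₁ ih₂ =>
    show indMap M (S.comp (f₁ + f₂) g) = (indMap M (f₁ + f₂)) ∘ₗ (indMap M g)
    rw [map_add, LinearMap.add_apply, map_add, map_add, LinearMap.add_comp, ← ih₁, ← ih₂]

/-- The induced `C#H`-module `M ⊗ H` of a `C`-module `M`. -/
def indOb (M : RMod K C.toLinCat) : RMod K S.lin where
  ob X := M.ob X ⊗[K] H
  map {X Y} := indMap M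
  map_id X := by
    apply TensorProduct.ext'
    intro m k
    show indMap M (C.idm X ⊗ₜ[K] (1 : H)) (m ⊗ₜ[K] k) = m ⊗ₜ[K] k
    rw [indMap_tmul M _ _ m k (ℛ K k)]
    have h1 : ∀ i ∈ (ℛ K k).index,
        M.map (C.act X X ((ℛ K k).left i) (C.idm X)) m ⊗ₜ[K] ((ℛ K k).right i * 1)
          = m ⊗ₜ[K] (Coalgebra.counit (R := K) ((ℛ K k).left i) • (ℛ K k).right i) := by
      intro i _
      rw [C.act_idm, map_smul, mul_one]
      have h2 : M.map (C.idm X) m = m := by rw [M.map_id]; rfl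
      rw [LinearMap.smul_apply, h2, TensorProduct.smul_tmul]
    rw [Finset.sum_congr rfl h1, ← TensorProduct.tmul_sum, sum_counit_smul]
  map_comp {X Y Z} f g := indMap_comp S M f g

/-- The induced morphism between induced modules. -/
def indHom {M N : RMod K C.toLinCat} (η : M ⟶ N) : indOb S M ⟶ indOb S N where
  app X := LinearMap.rTensor H (η.app X)
  natural {X Y} f w := by
    change M.ob Y ⊗[K] H at w
    show LinearMap.rTensor H (η.app X) (indMap M f w)
      = indMap N f (LinearMap.rTensor H (η.app Y) w)
    induction f using TensorProduct.induction_on with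
    | zero => simp
    | add f₁ f₂ ih₁ ih₂ => simp only [map_add, LinearMap.add_apply, ih₁, ih₂]
    | tmul g h' =>
      induction w using TensorProduct.induction_on with
      | zero => simp
      | add w₁ w₂ ih₁ ih₂ => simp only [map_add, ih₁, ih₂]
      | tmul m k =>
        rw [LinearMap.rTensor_tmul, indMap_tmul M g h' m k (ℛ K k),
          indMap_tmul N g h' (η.app Y m) k (ℛ K k), map_sum]
        refine Finset.sum_congr rfl fun i _ => ?_
        rw [LinearMap.rTensor_tmul, η.natural]

/-- The induction (extension of scalars) functor `Mod-C ⥤ Mod-(C#H)`. -/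
def indFunctor : RMod K C.toLinCat ⥤ RMod K S.lin where
  obj := indOb S
  map η := indHom S η
  map_id M := by
    apply RModHom.app_injective
    funext X
    exact LinearMap.rTensor_id H (M.ob X)
  map_comp f g := by
    apply RModHom.app_injective
    funext X
    exact LinearMap.rTensor_comp H _ _

@[simp] lemma lin_comp {X Y Z : C.Obj} (f : C.Hom X Y ⊗[K] H) (g : C.Hom Y Z ⊗[K] H) :
    S.lin.comp f g = S.comp f g := rfl

lemma comp_idm_one {X Y : C.Obj} (c : H) (w : C.Hom X Y) :
    S.comp ((C.idm X) ⊗ₜ[K] c) (w ⊗ₜ[K] (1 : H)) = w ⊗ₜ[K] c := by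
  rw [comp_tmul_repr S (C.idm X) c w 1 reprOne]
  simp [C.act_one, C.id_comp]

/-- Forward direction of the adjunction hom-equivalence. -/
def adjFwd {M : RMod K C.toLinCat} {N : RMod K S.lin} (η : indOb S M ⟶ N) :
    M ⟶ restrictOb S N where
  app X := (η.app X) ∘ₗ ((TensorProduct.mk K (M.ob X) H).flip 1)
  natural {X Y} f m := by
    show η.app X ((M.map f m) ⊗ₜ[K] (1 : H)) = N.map (f ⊗ₜ[K] (1 : H)) (η.app Y (m ⊗ₜ[K] 1))
    rw [← indMap_tmul_one M f 1 m]
    exact η.natural (f ⊗ₜ[K] (1 : H)) (m ⊗ₜ[K] (1 : H))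

/-- Backward direction of the adjunction hom-equivalence. -/
def adjBwd {M : RMod K C.toLinCat} {N : RMod K S.lin} (θ : M ⟶ restrictOb S N) :
    indOb S M ⟶ N where
  app X := TensorProduct.lift
    (((N.map ∘ₗ (TensorProduct.mk K (C.Hom X X) H (C.idm X))).flip) ∘ₗ θ.app X)
  natural {X Y} f w := by
    change M.ob Y ⊗[K] H at w
    show TensorProduct.lift _ (indMap M f w) = N.map f (TensorProduct.lift _ w)
    induction f using TensorProduct.induction_on with
    | zero => simp
    | add f₁ f₂ ih₁ ih₂ => simp only [map_add, LinearMap.add_apply, ih₁, ih₂]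
    | tmul g h' =>
      induction w using TensorProduct.induction_on with
      | zero => simp
      | add w₁ w₂ ih₁ ih₂ => simp only [map_add, ih₁, ih₂]
      | tmul m k =>
        set r := ℛ K k with hrdef
        rw [indMap_tmul M g h' m k r, map_sum]
        have lhs_eq : ∀ i ∈ r.index,
            TensorProduct.lift
                (((N.map ∘ₗ (TensorProduct.mk K (C.Hom X X) H (C.idm X))).flip) ∘ₗ θ.app X)
                (M.map (C.act X Y (r.left i) g) m ⊗ₜ[K] (r.right i * h'))
              = N.map ((C.act X Y (r.left i) g) ⊗ₜ[K] (r.right i * h')) (θ.app Y m) := by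
          intro i _
          show N.map ((C.idm X) ⊗ₜ[K] (r.right i * h')) (θ.app X (M.map (C.act X Y (r.left i) g) m))
            = _
          rw [θ.natural]
          show N.map ((C.idm X) ⊗ₜ[K] (r.right i * h'))
              (N.map ((C.act X Y (r.left i) g) ⊗ₜ[K] (1 : H)) (θ.app Y m)) = _
          obtain ⟨n, hn⟩ : ∃ n : N.ob Y, θ.app Y m = n := ⟨_, rfl⟩
          rw [hn]
          rw [← LinearMap.comp_apply, ← N.map_comp, lin_comp, comp_idm_one]
        rw [Finset.sum_congr rfl lhs_eq]
        show _ = N.map (g ⊗ₜ[K] h') (N.map ((C.idm Y) ⊗ₜ[K] k) (θ.app Y m))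
        obtain ⟨n, hn⟩ : ∃ n : N.ob Y, θ.app Y m = n := ⟨_, rfl⟩
        rw [hn]
        rw [← LinearMap.comp_apply, ← N.map_comp, lin_comp, comp_tmul_repr S g h' (C.idm Y) k r,
          map_sum, LinearMap.sum_apply]
        refine Finset.sum_congr rfl fun i _ => ?_
        rw [C.comp_id]

lemma bwd_fwd {M : RMod K C.toLinCat} {N : RMod K S.lin} (η : indOb S M ⟶ N) :
    adjBwd S (adjFwd S η) = η := by
  apply RModHom.app_injective
  funext X
  apply TensorProduct.ext'
  intro m k
  show N.map ((C.idm X) ⊗ₜ[K] k) (η.app X (m ⊗ₜ[K] (1 : H))) = η.app X (m ⊗ₜ[K] k)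
  rw [← η.natural ((C.idm X) ⊗ₜ[K] k) (m ⊗ₜ[K] (1 : H))]
  show η.app X (indMap M ((C.idm X) ⊗ₜ[K] k) (m ⊗ₜ[K] (1 : H))) = _
  rw [indMap_tmul_one M (C.idm X) k m]
  have h2 : M.map (C.idm X) m = m := by rw [M.map_id]; rfl
  rw [h2]

lemma fwd_bwd {M : RMod K C.toLinCat} {N : RMod K S.lin} (θ : M ⟶ restrictOb S N) :
    adjFwd S (adjBwd S θ) = θ := by
  apply RModHom.app_injective
  funext X
  apply LinearMap.ext
  intro m
  show N.map ((C.idm X) ⊗ₜ[K] (1 : H)) (θ.app X m) = θ.app X m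
  rw [show (C.idm X) ⊗ₜ[K] (1 : H) = S.lin.idm X from rfl, N.map_id]
  rfl

/-- The induction–restriction adjunction. -/
def indAdj : indFunctor S ⊣ restrictFunctor S :=
  Adjunction.mkOfHomEquiv
    { homEquiv := fun M N =>
        { toFun := adjFwd S
          invFun := adjBwd S
          left_inv := bwd_fwd S
          right_inv := fwd_bwd S }
      homEquiv_naturality_left_symm := fun {M' M N} f g => by
        apply RModHom.app_injective
        funext X
        apply TensorProduct.ext'
        intro m k
        rfl
      homEquiv_naturality_right := fun {M N N'} f g => by
        apply RModHom.app_injective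
        funext X
        rfl }

end Ind

section Limits

variable {D : LinCat K} {J : Type} [SmallCategory J]

/-- The module of compatible sections of a diagram of `D`-modules at an object `X`. -/
def secs (F : J ⥤ RMod K D) (X : D.Obj) : Submodule K (∀ j, (F.obj j).ob X) where
  carrier := {s | ∀ (j j' : J) (α : j ⟶ j'), (F.map α).app X (s j) = s j'}
  add_mem' := by
    intro a b ha hb j j' α
    show (F.map α).app X (a j + b j) = a j' + b j'
    rw [map_add, ha j j' α, hb j j' α]
  zero_mem' := by
    intro j j' α
    show (F.map α).app X 0 = 0
    rw [map_zero]
  smul_mem' := by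
    intro c a ha j j' α
    show (F.map α).app X (c • a j) = c • a j'
    rw [map_smul, ha j j' α]

/-- The comparison map from a cone to the module of sections. -/
def coneSec {F : J ⥤ RMod K D} (c : Limits.Cone F) (X : D.Obj) :
    c.pt.ob X →ₗ[K] secs F X where
  toFun m := ⟨fun j => (c.π.app j).app X m, by
    intro j j' α
    exact congrArg (fun (η : c.pt ⟶ F.obj j') => η.app X m) (c.w α)⟩
  map_add' a b := by
    apply Subtype.ext
    funext j
    exact map_add _ _ _
  map_smul' r a := by
    apply Subtype.ext
    funext j
    exact map_smul _ _ _

@[simp] lemma coneSec_apply {F : J ⥤ RMod K D} (c : Limits.Cone F) (X : D.Obj)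
    (m : c.pt.ob X) (j : J) :
    ((coneSec c X m : secs F X) : ∀ j, (F.obj j).ob X) j = (c.π.app j).app X m := rfl

/-- A cone is a pointwise limit if all its comparison maps are bijective. -/
def IsPtLimit {F : J ⥤ RMod K D} (c : Limits.Cone F) : Prop :=
  ∀ X, Function.Bijective (coneSec c X)

/-- The pointwise comparison equivalence of a pointwise limit cone. -/
noncomputable def secEquiv {F : J ⥤ RMod K D} (c : Limits.Cone F) (h : IsPtLimit c)
    (X : D.Obj) : c.pt.ob X ≃ₗ[K] secs F X :=
  LinearEquiv.ofBijective _ (h X)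

lemma secEquiv_symm_sec {F : J ⥤ RMod K D} (c : Limits.Cone F) (h : IsPtLimit c)
    (X : D.Obj) (z : secs F X) : coneSec c X ((secEquiv c h X).symm z) = z :=
  (LinearEquiv.ofBijective_apply _ _).symm.trans ((secEquiv c h X).apply_symm_apply z)

lemma secEquiv_symm_app {F : J ⥤ RMod K D} (c : Limits.Cone F) (h : IsPtLimit c)
    (X : D.Obj) (z : secs F X) (j : J) :
    (c.π.app j).app X ((secEquiv c h X).symm z) = (z : ∀ j, (F.obj j).ob X) j :=
  congrArg (fun (w : secs F X) => (w : ∀ j, (F.obj j).ob X) j) (secEquiv_symm_sec c h X z)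

/-- A pointwise limit cone is a limit cone. -/
noncomputable def isLimitOfPt {F : J ⥤ RMod K D} (c : Limits.Cone F) (h : IsPtLimit c) :
    Limits.IsLimit c :=
  { lift := fun t =>
      { app := fun X => ((secEquiv c h X).symm.toLinearMap) ∘ₗ coneSec t X
        natural := fun {X Y} f m => by
          apply (h X).injective
          apply Subtype.ext
          funext j
          show (c.π.app j).app X ((secEquiv c h X).symm (coneSec t X (t.pt.map f m)))
            = (c.π.app j).app X (c.pt.map f ((secEquiv c h Y).symm (coneSec t Y m)))
          calc (c.π.app j).app X ((secEquiv c h X).symm (coneSec t X (t.pt.map f m)))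
              = (t.π.app j).app X (t.pt.map f m) := secEquiv_symm_app c h X _ j
            _ = (F.obj j).map f ((t.π.app j).app Y m) := (t.π.app j).natural f m
            _ = (F.obj j).map f
                  ((c.π.app j).app Y ((secEquiv c h Y).symm (coneSec t Y m))) := by
                rw [secEquiv_symm_app c h Y _ j]
                rfl
            _ = (c.π.app j).app X (c.pt.map f ((secEquiv c h Y).symm (coneSec t Y m))) :=
                ((c.π.app j).natural f _).symm }
    fac := fun t j => by
      apply RModHom.app_injective
      funext X
      apply LinearMap.ext
      intro m
      exact secEquiv_symm_app c h X (coneSec t X m) j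
    uniq := fun t m' w => by
      apply RModHom.app_injective
      funext X
      apply LinearMap.ext
      intro m
      apply (h X).injective
      apply Subtype.ext
      funext j
      show (c.π.app j).app X (m'.app X m)
        = (c.π.app j).app X ((secEquiv c h X).symm (coneSec t X m))
      rw [secEquiv_symm_app c h X _ j]
      exact congrArg (fun (η : t.pt ⟶ F.obj j) => η.app X m) (w j) }

/-- Projection from sections to a component. -/
def secsProj (F : J ⥤ RMod K D) (j : J) (X : D.Obj) : secs F X →ₗ[K] (F.obj j).ob X :=
  (LinearMap.proj j) ∘ₗ (secs F X).subtype

@[simp] lemma secsProj_apply (F : J ⥤ RMod K D) (j : J) (X : D.Obj) (s : secs F X) :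
    secsProj F j X s = (s : ∀ j, (F.obj j).ob X) j := rfl

/-- The action of a morphism of `D` on sections. -/
def secsMap (F : J ⥤ RMod K D) {X Y : D.Obj} (f : D.Hom X Y) : secs F Y →ₗ[K] secs F X :=
  LinearMap.codRestrict (secs F X)
    ((LinearMap.pi fun j => ((F.obj j).map f) ∘ₗ (LinearMap.proj j)) ∘ₗ (secs F Y).subtype)
    (by
      intro s j j' α
      show (F.map α).app X ((F.obj j).map f ((s : ∀ j, (F.obj j).ob Y) j))
        = (F.obj j').map f ((s : ∀ j, (F.obj j).ob Y) j')
      rw [(F.map α).natural, s.2 j j' α])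

@[simp] lemma secsMap_apply (F : J ⥤ RMod K D) {X Y : D.Obj} (f : D.Hom X Y)
    (s : secs F Y) (j : J) :
    ((secsMap F f s : secs F X) : ∀ j, (F.obj j).ob X) j
      = (F.obj j).map f ((s : ∀ j, (F.obj j).ob Y) j) := rfl

/-- The bundled action of morphisms on sections. -/
def secsMapL (F : J ⥤ RMod K D) {X Y : D.Obj} :
    D.Hom X Y →ₗ[K] (secs F Y →ₗ[K] secs F X) where
  toFun := secsMap F
  map_add' f g := by
    apply LinearMap.ext
    intro s
    rw [LinearMap.add_apply]
    apply Subtype.ext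
    funext j
    rw [Submodule.coe_add, Pi.add_apply, secsMap_apply, secsMap_apply, secsMap_apply,
      map_add, LinearMap.add_apply]
  map_smul' r f := by
    apply LinearMap.ext
    intro s
    rw [RingHom.id_apply, LinearMap.smul_apply]
    apply Subtype.ext
    funext j
    rw [Submodule.coe_smul, Pi.smul_apply, secsMap_apply, secsMap_apply,
      map_smul, LinearMap.smul_apply]

@[simp] lemma secsMapL_apply (F : J ⥤ RMod K D) {X Y : D.Obj} (f : D.Hom X Y) :
    secsMapL F f = secsMap F f := rfl

/-- The module of sections as a `D`-module. -/
def secsMod (F : J ⥤ RMod K D) : RMod K D where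
  ob X := secs F X
  map {X Y} := secsMapL F
  map_id X := by
    apply LinearMap.ext
    intro s
    apply Subtype.ext
    funext j
    show ((secsMap F (D.idm X) s : secs F X) : ∀ j, (F.obj j).ob X) j
      = ((s : secs F X) : ∀ j, (F.obj j).ob X) j
    rw [secsMap_apply, (F.obj j).map_id]
    rfl
  map_comp {X Y Z} f g := by
    apply LinearMap.ext
    intro s
    apply Subtype.ext
    funext j
    show ((secsMap F (D.comp f g) s : secs F X) : ∀ j, (F.obj j).ob X) j
      = ((secsMap F f (secsMap F g s) : secs F X) : ∀ j, (F.obj j).ob X) j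
    rw [secsMap_apply, secsMap_apply, secsMap_apply, (F.obj j).map_comp]
    rfl

/-- The canonical pointwise cone on a diagram of `D`-modules. -/
def ptCone (F : J ⥤ RMod K D) : Limits.Cone F where
  pt := secsMod F
  π :=
    { app := fun j =>
        { app := fun X => secsProj F j X
          natural := fun {X Y} f s => rfl }
      naturality := fun j j' α => by
        apply RModHom.app_injective
        funext X
        apply LinearMap.ext
        intro s
        exact (s.2 j j' α).symm }

lemma isPtLimit_ptCone (F : J ⥤ RMod K D) : IsPtLimit (ptCone F) := by
  intro X
  constructor
  · intro a b hab
    apply Subtype.ext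
    funext j
    exact congrArg (fun (w : secs F X) => (w : ∀ j, (F.obj j).ob X) j) hab
  · intro z
    refine ⟨z, ?_⟩
    apply Subtype.ext
    funext j
    rfl

end Limits

section IndLimits

variable {C : LeftHCat K H} (S : SmashCat C) {J : Type} [SmallCategory J]

noncomputable local instance : DecidableEq (Module.Basis.ofVectorSpaceIndex K H) :=
  fun _ _ => Classical.propDecidable _

/-- The tensor product with `H` as a space of finitely supported families,
via a basis of `H`. -/
noncomputable def tenEquiv (V : Type) [AddCommGroup V] [Module K V] :
    (V ⊗[K] H) ≃ₗ[K] ((Module.Basis.ofVectorSpaceIndex K H) →₀ V) :=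
  (LinearEquiv.lTensor V ((Module.Basis.ofVectorSpace K H).repr)).trans
    (TensorProduct.finsuppScalarRight K K V _)

lemma tenEquiv_tmul_apply (V : Type) [AddCommGroup V] [Module K V] (v : V) (h : H)
    (i : Module.Basis.ofVectorSpaceIndex K H) :
    tenEquiv V (v ⊗ₜ[K] h) i = ((Module.Basis.ofVectorSpace K H).repr h i) • v := by
  simp [tenEquiv, TensorProduct.finsuppScalarRight_apply_tmul_apply]

lemma tenEquiv_zero (V : Type) [AddCommGroup V] [Module K V] :
    tenEquiv V (0 : V ⊗[K] H) = 0 := by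
  have h0 : (0 : V ⊗[K] H) = (0 : V) ⊗ₜ[K] (0 : H) := (TensorProduct.zero_tmul _ _).symm
  rw [h0]
  apply Finsupp.ext
  intro i
  rw [tenEquiv_tmul_apply, smul_zero, Finsupp.zero_apply]

lemma tenEquiv_natural {V W : Type} [AddCommGroup V] [Module K V] [AddCommGroup W]
    [Module K W] (f : V →ₗ[K] W) (z : V ⊗[K] H) (i : Module.Basis.ofVectorSpaceIndex K H) :
    tenEquiv W (LinearMap.rTensor H f z) i = f (tenEquiv V z i) := by
  induction z using TensorProduct.induction_on with
  | zero => simp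
  | add z₁ z₂ ih₁ ih₂ => simp only [map_add, Finsupp.add_apply, ih₁, ih₂]
  | tmul v h =>
    rw [LinearMap.rTensor_tmul, tenEquiv_tmul_apply, tenEquiv_tmul_apply, map_smul]

lemma tenEquiv_sum_repr (V : Type) [AddCommGroup V] [Module K V] (z : V ⊗[K] H)
    (s : Finset (Module.Basis.ofVectorSpaceIndex K H)) (hs : (tenEquiv V z).support ⊆ s) :
    ∑ i ∈ s, (tenEquiv V z i) ⊗ₜ[K] ((Module.Basis.ofVectorSpace K H) i : H) = z := by
  apply (tenEquiv V).injective
  apply Finsupp.ext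
  intro i'
  rw [map_sum, Finsupp.finset_sum_apply]
  by_cases hi : i' ∈ s
  · rw [Finset.sum_eq_single_of_mem i' hi]
    · rw [tenEquiv_tmul_apply, Module.Basis.repr_self, Finsupp.single_apply]
      simp
    · intro b _ hb
      rw [tenEquiv_tmul_apply, Module.Basis.repr_self, Finsupp.single_apply]
      simp [hb]
  · have h1 : tenEquiv V z i' = 0 := Finsupp.notMem_support_iff.mp fun hmem => hi (hs hmem)
    rw [h1]
    apply Finset.sum_eq_zero
    intro b hb
    have hbne : b ≠ i' := fun e => hi (e ▸ hb)
    rw [tenEquiv_tmul_apply, Module.Basis.repr_self, Finsupp.single_apply]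
    simp [hbne]

lemma isPtLimit_ind_ptCone [Fintype J] (F : J ⥤ RMod K C.toLinCat) :
    IsPtLimit ((indFunctor S).mapCone (ptCone F)) := by
  classical
  intro X
  constructor
  · refine (injective_iff_map_eq_zero _).mpr ?_
    intro z hz
    have hcomp : ∀ j : J, LinearMap.rTensor H (secsProj F j X) z = 0 := by
      intro j
      exact congrArg (fun (w : secs (F ⋙ indFunctor S) X) =>
        (w : ∀ j, (F ⋙ indFunctor S).obj j |>.ob X) j) hz
    refine (tenEquiv (secs F X)).map_eq_zero_iff.mp ?_
    apply Finsupp.ext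
    intro i
    rw [Finsupp.zero_apply]
    apply Subtype.ext
    funext j
    have h1 := tenEquiv_natural (secsProj F j X) z i
    rw [hcomp j, tenEquiv_zero, Finsupp.zero_apply] at h1
    exact h1.symm
  · intro t
    set u : Module.Basis.ofVectorSpaceIndex K H → secs F X := fun i =>
      ⟨fun j => tenEquiv _ ((t : ∀ j, (F ⋙ indFunctor S).obj j |>.ob X) j) i, by
        intro j j' α
        refine (tenEquiv_natural ((F.map α).app X) _ i).symm.trans ?_
        exact congrArg (fun w => tenEquiv _ w i) (t.2 j j' α)⟩ with hu
    set sup : Finset (Module.Basis.ofVectorSpaceIndex K H) :=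
      Finset.univ.biUnion (fun j : J =>
        (tenEquiv _ ((t : ∀ j, (F ⋙ indFunctor S).obj j |>.ob X) j)).support) with hsup
    refine ⟨∑ i ∈ sup, (u i) ⊗ₜ[K] ((Module.Basis.ofVectorSpace K H) i : H), ?_⟩
    apply Subtype.ext
    funext j
    show LinearMap.rTensor H (secsProj F j X)
        (∑ i ∈ sup, (u i) ⊗ₜ[K] ((Module.Basis.ofVectorSpace K H) i : H))
      = (t : ∀ j, (F ⋙ indFunctor S).obj j |>.ob X) j
    rw [map_sum]
    have h3 : ∀ i ∈ sup, LinearMap.rTensor H (secsProj F j X)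
        ((u i) ⊗ₜ[K] ((Module.Basis.ofVectorSpace K H) i : H))
        = (tenEquiv _ ((t : ∀ j, (F ⋙ indFunctor S).obj j |>.ob X) j) i)
            ⊗ₜ[K] ((Module.Basis.ofVectorSpace K H) i : H) := by
      intro i _
      rw [LinearMap.rTensor_tmul]
      rfl
    rw [Finset.sum_congr rfl h3]
    apply tenEquiv_sum_repr
    intro i hi
    exact Finset.mem_biUnion.mpr ⟨j, Finset.mem_univ j, hi⟩

lemma indFunctor_preservesFiniteLimits : PreservesFiniteLimits (indFunctor S) := by
  constructor
  intro J _ _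
  constructor
  intro F
  constructor
  intro c hc
  have h0 : Limits.IsLimit (ptCone F) := isLimitOfPt _ (isPtLimit_ptCone F)
  have h1 : Limits.IsLimit ((indFunctor S).mapCone (ptCone F)) :=
    isLimitOfPt _ (isPtLimit_ind_ptCone S F)
  exact ⟨h1.ofIsoLimit ((Limits.Cones.functoriality F (indFunctor S)).mapIso
    (hc.uniqueUpToIso h0)).symm⟩

end IndLimits

end S5

end S5Aux

section Statement5
open CategoryTheory.Limits
variable {K : Type} [Field K] {H : Type} [Ring H] [HopfAlgebra K H]

/-- **Statement 5.** Let `C` be a left `H`-category.  (1) The extension-of-scalars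
functor from `Mod-C` to `Mod-(C#H)` (i.e. any left adjoint of the restriction of
scalars) is exact, i.e. preserves finite limits and finite colimits.  (2) Every
injective object of `Mod-(C#H)` restricts to an injective object of `Mod-C`. -/
theorem statement5 (C : LeftHCat K H) (S : SmashCat C) :
    (∀ (E : RMod K C.toLinCat ⥤ RMod K S.lin), (E ⊣ restrictFunctor S) →
      Nonempty (PreservesFiniteLimits E) ∧ Nonempty (PreservesFiniteColimits E)) ∧
    (∀ I : RMod K S.lin, Injective I → Injective (restrictOb S I)) := by
  constructor
  · intro E adj
    have hpl : PreservesFiniteLimits (S5.indFunctor S) := S5.indFunctor_preservesFiniteLimits S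
    have hiso : S5.indFunctor S ≅ E := (adj.leftAdjointUniq (S5.indAdj S)).symm
    constructor
    · exact ⟨preservesFiniteLimits_of_natIso hiso⟩
    · have h1 : PreservesColimitsOfSize.{0, 0} E := adj.leftAdjoint_preservesColimits
      exact ⟨PreservesColimitsOfSize.preservesFiniteColimits E⟩
  · intro I hI
    haveI : PreservesFiniteLimits (S5.indFunctor S) := S5.indFunctor_preservesFiniteLimits S
    haveI : (S5.indFunctor S).PreservesMonomorphisms := inferInstance
    haveI := hI
    exact Injective.injective_of_adjoint (S5.indAdj S) I

end Statement5

end
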